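/- For every x, y ∈ ℝ, the limit as a → 0⁺ of (1/a)·( h_a(x+y) − h_a(x−y) ) equals 2xy, where h_a(u) = (1/a)·log(exp(a·u) + exp(−a·u)). -/

import Mathlib

/-!
Since `exp t + exp (-t) = 2 cosh t`, the rescaled correlator equals
`(log (cosh (a (x + y))) - log (cosh (a (x - y)))) / a ^ 2`. As `log ∘ cosh` vanishes at `0`
with derivative `tanh`, and `tanh' 0 = 1`, a second-order L'Hôpital rule gives
`log (cosh (a u)) / a ^ 2 → u ^ 2 / 2`, and `((x + y) ^ 2 - (x - y) ^ 2) / 2 = 2 x y`.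
-/

open Filter

/-- The log-sum-exponential function with scaling factor `a`. -/
noncomputable def lse (a u : ℝ) : ℝ :=
  (1 / a) * Real.log (Real.exp (a * u) + Real.exp (-(a * u)))

open Topology Real

theorem Real.hasDerivAt_tanh (t : ℝ) : HasDerivAt tanh (1 - tanh t ^ 2) t := by
  have h := (hasDerivAt_sinh t).div (hasDerivAt_cosh t) (cosh_pos t).ne'
  rw [show sinh / cosh = tanh from funext fun t => (tanh_eq_sinh_div_cosh t).symm] at h
  refine h.congr_deriv ?_
  rw [tanh_eq_sinh_div_cosh]
  field_simp

theorem Real.hasDerivAt_log_cosh (t : ℝ) : HasDerivAt (fun t => log (cosh t)) (tanh t) t := by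
  convert (hasDerivAt_cosh t).log (cosh_pos t).ne' using 1
  rw [tanh_eq_sinh_div_cosh]

theorem tendsto_div_sq_of_hasDerivAt {f f' : ℝ → ℝ} {L : ℝ}
    (hf : ∀ᶠ x in 𝓝 0, HasDerivAt f (f' x) x) (hf0 : f 0 = 0) (hf'0 : f' 0 = 0)
    (hf' : HasDerivAt f' L 0) :
    Tendsto (fun x => f x / x ^ 2) (𝓝[≠] 0) (𝓝 (L / 2)) := by
  have hslope : Tendsto (fun x => f' x / (2 * x)) (𝓝[≠] 0) (𝓝 (L / 2)) := by
    refine ((hasDerivAt_iff_tendsto_slope.mp hf').div_const 2).congr fun x => ?_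
    rw [slope_def_field, hf'0, sub_zero, sub_zero, div_div, mul_comm]
  refine HasDerivAt.lhopital_zero_nhdsNE (nhdsWithin_le_nhds hf)
    (Eventually.of_forall fun x => by simpa using hasDerivAt_pow 2 x)
    (eventually_nhdsWithin_of_forall fun x hx => mul_ne_zero two_ne_zero hx) ?_ ?_ hslope
  · simpa [hf0] using hf.self_of_nhds.continuousAt.continuousWithinAt.tendsto (s := {0}ᶜ)
  · simpa using ((continuous_pow 2).tendsto (0 : ℝ)).mono_left nhdsWithin_le_nhds

theorem tendsto_log_cosh_mul_div_sq (u : ℝ) :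
    Tendsto (fun a => log (cosh (a * u)) / a ^ 2) (𝓝[≠] 0) (𝓝 (u ^ 2 / 2)) := by
  have hderiv (a : ℝ) : HasDerivAt (fun a => log (cosh (a * u))) (tanh (a * u) * u) a :=
    (hasDerivAt_log_cosh (a * u)).comp (h := (· * u)) a (hasDerivAt_mul_const u)
  have hderiv2 : HasDerivAt (fun a => tanh (a * u) * u) (u ^ 2) 0 := by
    have := ((hasDerivAt_tanh (0 * u)).comp 0 (hasDerivAt_mul_const u)).mul_const u
    simpa [sq] using this
  exact tendsto_div_sq_of_hasDerivAt (Eventually.of_forall hderiv) (by simp) (by simp) hderiv2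

theorem lse_eq_log_cosh (a u : ℝ) : lse a u = (log 2 + log (cosh (a * u))) / a := by
  rw [lse, ← log_mul two_ne_zero (cosh_pos _).ne', cosh_eq]
  ring_nf

theorem rescaled_lse_correlator_tendsto_product (x y : ℝ) :
    Tendsto (fun a : ℝ => (1 / a) * (lse a (x + y) - lse a (x - y)))
      (nhdsWithin 0 (Set.Ioi 0)) (nhds (2 * x * y)) := by
  have h := (tendsto_log_cosh_mul_div_sq (x + y)).sub (tendsto_log_cosh_mul_div_sq (x - y))
  rw [show (x + y) ^ 2 / 2 - (x - y) ^ 2 / 2 = 2 * x * y by ring] at h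
  refine (h.mono_left (nhdsWithin_mono 0 fun a ha => ne_of_gt ha)).congr fun a => ?_
  simp only [lse_eq_log_cosh]
  ring
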